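/- Every finite connected simple AT-free graph has slimness at most 1. -/

import Mathlib

open SimpleGraph

/-- A walk is a geodesic (shortest path) if its length equals the distance
between its endpoints. -/
def IsGeodesic {V : Type} (G : SimpleGraph V) {x y : V} (p : G.Walk x y) : Prop :=
  p.length = G.dist x y

/-- `G` is `δ`-slim: in every geodesic triangle, every vertex on one side is within
distance `δ` (in `G`) from the union of the other two sides. -/
def IsSlim {V : Type} (G : SimpleGraph V) (δ : ℕ) : Prop :=
  ∀ (x y z : V) (pxy : G.Walk x y) (pxz : G.Walk x z) (pyz : G.Walk y z),
    IsGeodesic G pxy → IsGeodesic G pxz → IsGeodesic G pyz →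
    ∀ u ∈ pxy.support, ∃ v, (v ∈ pxz.support ∨ v ∈ pyz.support) ∧ G.dist u v ≤ δ

/-- The slimness `sl(G)`: the smallest `δ` such that `G` is `δ`-slim. -/
noncomputable def slimness {V : Type} (G : SimpleGraph V) : ℕ :=
  sInf {δ : ℕ | IsSlim G δ}

/-- `{x,y,z}` is an asteroidal triple of `G`: an independent triple such that each pair
is joined by a path avoiding the closed neighborhood of the third vertex. -/
def IsAsteroidalTriple {V : Type} (G : SimpleGraph V) (x y z : V) : Prop :=
  x ≠ y ∧ y ≠ z ∧ x ≠ z ∧ ¬ G.Adj x y ∧ ¬ G.Adj y z ∧ ¬ G.Adj x z ∧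
  (∃ p : G.Walk x y, ∀ w ∈ p.support, w ≠ z ∧ ¬ G.Adj z w) ∧
  (∃ p : G.Walk y z, ∀ w ∈ p.support, w ≠ x ∧ ¬ G.Adj x w) ∧
  (∃ p : G.Walk x z, ∀ w ∈ p.support, w ≠ y ∧ ¬ G.Adj y w)

/-- `G` is AT-free: it contains no asteroidal triple. -/
def ATFree {V : Type} (G : SimpleGraph V) : Prop :=
  ∀ x y z : V, ¬ IsAsteroidalTriple G x y z

/-!
If a vertex `u` on a geodesic from `x` to `y` were at distance at least `2` from the other two
sides of the triangle, those sides would form an `x`–`y` walk avoiding the closed neighbourhood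
of `u`. The half of the geodesic from `u` to `y` avoids the closed neighbourhood of `x`, because
each of its vertices is at least as far from `x` as `u` is; symmetrically for the half from `x`
to `u`. So `x, y, u` would be an asteroidal triple.
-/

variable {V : Type} {G : SimpleGraph V}

lemma SimpleGraph.ne_and_not_adj_of_two_le_dist {a b : V} (h : 2 ≤ G.dist a b) :
    b ≠ a ∧ ¬G.Adj a b := by
  refine ⟨fun hba => ?_, fun hab => ?_⟩
  · simp [hba] at h
  · simp [dist_eq_one_iff_adj.mpr hab] at h

namespace IsGeodesic

variable {x y u w : V} {p : G.Walk x y}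

lemma takeUntil [DecidableEq V] (hp : IsGeodesic G p) (hu : u ∈ p.support) :
    IsGeodesic G (p.takeUntil u hu) :=
  length_eq_dist_of_subwalk hp (p.isSubwalk_takeUntil hu)

lemma dropUntil [DecidableEq V] (hp : IsGeodesic G p) (hu : u ∈ p.support) :
    IsGeodesic G (p.dropUntil u hu) :=
  length_eq_dist_of_subwalk hp (p.isSubwalk_dropUntil hu)

lemma dist_add_dist (hp : IsGeodesic G p) (hu : u ∈ p.support) :
    G.dist x u + G.dist u y = G.dist x y := by
  classical
  have hlen := congrArg Walk.length (p.take_spec hu)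
  rw [Walk.length_append] at hlen
  rw [← hp.takeUntil hu, ← hp.dropUntil hu, hlen, ← hp]

lemma dist_le_dist_of_mem_takeUntil [DecidableEq V] (hp : IsGeodesic G p)
    (hu : u ∈ p.support) (hw : w ∈ (p.takeUntil u hu).support) :
    G.dist u y ≤ G.dist w y := by
  have hxuy := hp.dist_add_dist hu
  have hxwu := (hp.takeUntil hu).dist_add_dist hw
  have hxwy := ((p.takeUntil u hu).takeUntil w hw).reachable.dist_triangle_left y
  omega

lemma dist_le_dist_of_mem_dropUntil [DecidableEq V] (hp : IsGeodesic G p)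
    (hu : u ∈ p.support) (hw : w ∈ (p.dropUntil u hu).support) :
    G.dist x u ≤ G.dist x w := by
  have hxuy := hp.dist_add_dist hu
  have huwy := (hp.dropUntil hu).dist_add_dist hw
  have hxwy := ((p.dropUntil u hu).dropUntil w hw).reachable.dist_triangle_right x
  omega

end IsGeodesic

theorem isAsteroidalTriple_of_isGeodesic_of_two_le_dist {x y u : V} {p : G.Walk x y}
    (hp : IsGeodesic G p) (hu : u ∈ p.support) (q : G.Walk x y)
    (hq : ∀ w ∈ q.support, 2 ≤ G.dist u w) : IsAsteroidalTriple G x y u := by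
  classical
  have hdxu : 2 ≤ G.dist x u := dist_comm (G := G) ▸ hq x q.start_mem_support
  have hdyu : 2 ≤ G.dist y u := dist_comm (G := G) ▸ hq y q.end_mem_support
  have hdxy : 2 ≤ G.dist x y := by
    have := hp.dist_add_dist hu
    rw [dist_comm (u := y)] at hdyu
    omega
  obtain ⟨hyx, hnxy⟩ := ne_and_not_adj_of_two_le_dist hdxy
  obtain ⟨hux, hnxu⟩ := ne_and_not_adj_of_two_le_dist hdxu
  obtain ⟨huy, hnyu⟩ := ne_and_not_adj_of_two_le_dist hdyu
  refine ⟨hyx.symm, huy.symm, hux.symm, hnxy, hnyu, hnxu,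
    ⟨q, fun w hw => ne_and_not_adj_of_two_le_dist (hq w hw)⟩,
    ⟨(p.dropUntil u hu).reverse, fun w hw => ?_⟩, ⟨p.takeUntil u hu, fun w hw => ?_⟩⟩
  · rw [Walk.support_reverse, List.mem_reverse] at hw
    exact ne_and_not_adj_of_two_le_dist (hdxu.trans (hp.dist_le_dist_of_mem_dropUntil hu hw))
  · have hdwy := hp.dist_le_dist_of_mem_takeUntil hu hw
    rw [dist_comm (u := u), dist_comm (u := w)] at hdwy
    exact ne_and_not_adj_of_two_le_dist (hdyu.trans hdwy)

theorem isSlim_one_of_atFree (hAT : ATFree G) : IsSlim G 1 := by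
  intro x y z pxy pxz pyz hxy _ _ u hu
  by_contra! hfar
  refine hAT x y u (isAsteroidalTriple_of_isGeodesic_of_two_le_dist hxy hu
    (pxz.append pyz.reverse) fun w hw => ?_)
  rw [Walk.mem_support_append_iff, Walk.support_reverse, List.mem_reverse] at hw
  exact hfar w hw

theorem slimness_le_one_of_atFree_general {V : Type} (G : SimpleGraph V) (hAT : ATFree G) :
    slimness G ≤ 1 :=
  Nat.sInf_le (isSlim_one_of_atFree hAT)

/-- Every finite connected AT-free graph has slimness at most 1. -/
theorem slimness_le_one_of_atFree {V : Type} [Fintype V] (G : SimpleGraph V)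
    (hG : G.Connected) (hAT : ATFree G) :
    slimness G ≤ 1 :=
  slimness_le_one_of_atFree_general G hAT
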